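/- arXiv:math/0304269 — 2 statements merged into one kernel-verified Lean document; each statement's English description precedes it below -/
import Mathlib

section
/- Let E and F be finite-dimensional complex inner product spaces and let T : E → F be a linear map, with adjoint T* : F → E. Then for every real t > 0, trace(exp(-t · (T* ∘ T))) - trace(exp(-t · (T ∘ T*))) = dim(ker T) - dim(ker T*). In particular, the left-hand side is independent of t and equals the index of T. -/
/-!
Expanding both exponentials, the left-hand side is `∑ (-t)ⁿ / n! · (Tr (T*T)ⁿ - Tr (TT*)ⁿ)`.
For `n ≥ 1` cyclicity of the trace gives `Tr (gf)ⁿ = Tr (fg)ⁿ` for any `f : E → F`, `g : F → E`, so only the `n = 0` term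
`dim E - dim F` survives; this equals `dim ker T - dim ker T*` by rank–nullity together with
`ker T* = (range T)ᗮ`.
-/

open LinearMap Module
open scoped Nat

theorem LinearMap.trace_comp_pow_succ_comm {R M N : Type*} [CommRing R]
    [AddCommGroup M] [Module R M] [Module.Free R M] [Module.Finite R M]
    [AddCommGroup N] [Module R N] [Module.Free R N] [Module.Finite R N]
    (f : M →ₗ[R] N) (g : N →ₗ[R] M) (n : ℕ) :
    trace R M ((g ∘ₗ f) ^ (n + 1)) = trace R N ((f ∘ₗ g) ^ (n + 1)) := by
  have hg : ((g ∘ₗ f) ^ n) ∘ₗ g = g ∘ₗ ((f ∘ₗ g) ^ n) :=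
    Module.End.commute_pow_left_of_commute (comp_assoc _ _ _) n
  calc trace R M ((g ∘ₗ f) ^ (n + 1)) = trace R M ((((g ∘ₗ f) ^ n) ∘ₗ g) ∘ₗ f) := by
        rw [pow_succ, Module.End.mul_eq_comp, comp_assoc]
    _ = trace R N (f ∘ₗ g ∘ₗ ((f ∘ₗ g) ^ n)) := by rw [trace_comp_comm', hg]
    _ = trace R N ((f ∘ₗ g) ^ (n + 1)) := by
        rw [pow_succ', Module.End.mul_eq_comp, comp_assoc]

section

variable {𝕜 E F : Type*} [RCLike 𝕜]
  [NormedAddCommGroup E] [NormedSpace 𝕜 E] [FiniteDimensional 𝕜 E]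
  [NormedAddCommGroup F] [NormedSpace 𝕜 F] [FiniteDimensional 𝕜 F]

theorem hasSum_trace_exp (X : E →L[𝕜] E) :
    HasSum (fun n ↦ (n !⁻¹ : 𝕜) • trace 𝕜 E ((X : E →ₗ[𝕜] E) ^ n))
      (trace 𝕜 E (NormedSpace.exp X : E →L[𝕜] E)) := by
  have := FiniteDimensional.complete 𝕜 (E →L[𝕜] E)
  let τ : (E →L[𝕜] E) →L[𝕜] 𝕜 :=
    (trace 𝕜 E ∘ₗ ContinuousLinearMap.coeLM 𝕜).toContinuousLinearMap
  simpa [τ] using (NormedSpace.exp_series_hasSum_exp' (𝕂 := 𝕜) X).mapL τ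

theorem trace_exp_comp_sub_trace_exp_comp (f : E →L[𝕜] F) (g : F →L[𝕜] E) :
    trace 𝕜 E (NormedSpace.exp (g ∘L f) : E →L[𝕜] E)
      - trace 𝕜 F (NormedSpace.exp (f ∘L g) : F →L[𝕜] F) = finrank 𝕜 E - finrank 𝕜 F := by
  have hsum := (hasSum_trace_exp (g ∘L f)).sub (hasSum_trace_exp (f ∘L g))
  rw [hsum.unique (hasSum_single 0 fun n hn ↦ ?_)]
  · simp
  · obtain ⟨m, rfl⟩ := Nat.exists_eq_add_one_of_ne_zero hn
    rw [ContinuousLinearMap.toLinearMap_comp, ContinuousLinearMap.toLinearMap_comp,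
      trace_comp_pow_succ_comm, sub_self]

end

theorem LinearMap.finrank_ker_sub_finrank_ker_adjoint {𝕜 E F : Type*} [RCLike 𝕜]
    [NormedAddCommGroup E] [InnerProductSpace 𝕜 E] [FiniteDimensional 𝕜 E]
    [NormedAddCommGroup F] [InnerProductSpace 𝕜 F] [FiniteDimensional 𝕜 F] (A : E →ₗ[𝕜] F) :
    (finrank 𝕜 A.ker : ℤ) - finrank 𝕜 A.adjoint.ker = finrank 𝕜 E - finrank 𝕜 F := by
  have hE := A.finrank_range_add_finrank_ker
  have hF := A.range.finrank_add_finrank_orthogonal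
  rw [A.orthogonal_range] at hF
  omega

theorem mckean_singer_finite_dim_general
    {E F : Type*} [NormedAddCommGroup E] [InnerProductSpace ℂ E] [FiniteDimensional ℂ E]
    [NormedAddCommGroup F] [InnerProductSpace ℂ F] [FiniteDimensional ℂ F]
    (T : E →L[ℂ] F) (t : ℝ) :
    LinearMap.trace ℂ E
        (NormedSpace.exp ((-t) • (ContinuousLinearMap.adjoint T ∘L T)) : E →L[ℂ] E).toLinearMap
      - LinearMap.trace ℂ F
        (NormedSpace.exp ((-t) • (T ∘L ContinuousLinearMap.adjoint T)) : F →L[ℂ] F).toLinearMap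
      = (Module.finrank ℂ (LinearMap.ker T.toLinearMap) : ℂ)
        - (Module.finrank ℂ (LinearMap.ker (ContinuousLinearMap.adjoint T).toLinearMap) : ℂ) := by
  rw [← ContinuousLinearMap.comp_smul, ← ContinuousLinearMap.smul_comp,
    trace_exp_comp_sub_trace_exp_comp]
  have hadj : (ContinuousLinearMap.adjoint T : F →ₗ[ℂ] E) = LinearMap.adjoint (T : E →ₗ[ℂ] F) :=
    (LinearMap.adjoint_eq_toCLM_adjoint _).symm
  rw [hadj]
  exact_mod_cast (T.toLinearMap.finrank_ker_sub_finrank_ker_adjoint).symm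

/-- Finite-dimensional McKean–Singer formula: for a linear map `T` between
finite-dimensional complex inner product spaces with adjoint `T*`, and any `t > 0`,
`Tr(exp(-t T* T)) - Tr(exp(-t T T*)) = dim ker T - dim ker T*`. -/
theorem mckean_singer_finite_dim
    {E F : Type*} [NormedAddCommGroup E] [InnerProductSpace ℂ E] [FiniteDimensional ℂ E]
    [NormedAddCommGroup F] [InnerProductSpace ℂ F] [FiniteDimensional ℂ F]
    (T : E →L[ℂ] F) (t : ℝ) (ht : 0 < t) :
    LinearMap.trace ℂ E
        (NormedSpace.exp ((-t) • (ContinuousLinearMap.adjoint T ∘L T)) : E →L[ℂ] E).toLinearMap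
      - LinearMap.trace ℂ F
        (NormedSpace.exp ((-t) • (T ∘L ContinuousLinearMap.adjoint T)) : F →L[ℂ] F).toLinearMap
      = (Module.finrank ℂ (LinearMap.ker T.toLinearMap) : ℂ)
        - (Module.finrank ℂ (LinearMap.ker (ContinuousLinearMap.adjoint T).toLinearMap) : ℂ) :=
  mckean_singer_finite_dim_general T t
end

section
/- Let E and F be finite-dimensional complex inner product spaces and let T : E → F be a linear map with adjoint T* : F → E. On the direct sum V = E ⊕ F define the odd operator D by D(e, f) = (T* f, T e) and the grading operator ε by ε(e, f) = (e, -f). Then for every real t > 0, the supertrace trace(ε ∘ exp(-t · D²)) equals dim(ker T) - dim(ker T*). -/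
noncomputable local instance prodCLMTopologicalRing
    {E F : Type*} [NormedAddCommGroup E] [NormedSpace ℂ E]
    [NormedAddCommGroup F] [NormedSpace ℂ F] :
    IsTopologicalRing ((E × F) →L[ℂ] (E × F)) := inferInstance

/-!
Since `ε` anticommutes with `D`, cyclicity of the trace gives `Tr_s (D ^ k) = -Tr_s (D ^ k)` for
every `k ≥ 1`, so all terms of the exponential series of `-t D²` except the first have vanishing
supertrace and `Tr_s (exp (-t D²)) = Tr_s 1 = dim E - dim F`. Finally `ker T* = (range T)ᗮ`, so
rank–nullity turns `dim E - dim F` into `dim ker T - dim ker T*`.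
-/

open ContinuousLinearMap

theorem LinearMap.trace_mul_pow_eq_zero_of_anticommute {R M : Type*} [CommRing R]
    [NoZeroDivisors R] [CharZero R] [AddCommGroup M] [Module R M] [Module.Free R M]
    [Module.Finite R M] {g d : Module.End R M} (h : g * d = -(d * g)) {k : ℕ} (hk : k ≠ 0) :
    trace R M (g * d ^ k) = 0 := by
  obtain ⟨k, rfl⟩ := Nat.exists_eq_succ_of_ne_zero hk
  rw [← CharZero.eq_neg_self_iff]
  calc trace R M (g * d ^ (k + 1))
      = trace R M (d * (g * d ^ k)) := by rw [pow_succ, ← mul_assoc, trace_mul_comm]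
    _ = -trace R M (g * d ^ (k + 1)) := by
        rw [← mul_assoc, ← neg_eq_iff_eq_neg.mpr h, neg_mul, map_neg, pow_succ', mul_assoc]

section Exp

variable {𝕂 V : Type*} [RCLike 𝕂] [NormedAddCommGroup V] [NormedSpace 𝕂 V]
  [FiniteDimensional 𝕂 V]

theorem trace_comp_exp_of_trace_comp_pow_eq_zero (g a : V →L[𝕂] V)
    (h : ∀ n ≠ 0, LinearMap.trace 𝕂 V (g ∘L a ^ n) = 0) :
    LinearMap.trace 𝕂 V (g ∘L NormedSpace.exp a) = LinearMap.trace 𝕂 V g := by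
  have : CompleteSpace (V →L[𝕂] V) := FiniteDimensional.complete 𝕂 _
  let τ : (V →L[𝕂] V) →L[𝕂] 𝕂 := LinearMap.toContinuousLinearMap
    (LinearMap.trace 𝕂 V ∘ₗ coeLM 𝕂 ∘ₗ LinearMap.mulLeft 𝕂 g)
  have hτ : ∀ b, τ b = LinearMap.trace 𝕂 V (g ∘L b) := fun _ ↦ rfl
  have hsum := τ.hasSum (NormedSpace.exp_series_hasSum_exp' (𝕂 := 𝕂) a)
  have hterm : ∀ n ≠ 0, τ ((n.factorial : 𝕂)⁻¹ • a ^ n) = 0 := fun n hn ↦ by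
    rw [map_smul, hτ, h n hn, smul_zero]
  have hsingle : HasSum (fun n : ℕ ↦ τ ((n.factorial : 𝕂)⁻¹ • a ^ n)) (τ 1) := by
    convert hasSum_single 0 hterm
    simp
  rw [← hτ, hsum.unique hsingle, hτ, ← mul_def, mul_one]

theorem trace_comp_exp_smul_sq_of_anticommute {g d : V →L[𝕂] V} (h : g * d = -(d * g)) (s : 𝕂) :
    LinearMap.trace 𝕂 V (g ∘L NormedSpace.exp (s • (d ∘L d))) = LinearMap.trace 𝕂 V g := by
  refine trace_comp_exp_of_trace_comp_pow_eq_zero g _ fun n hn ↦ ?_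
  have h' : (g : Module.End 𝕂 V) * d = -(d * g) := congrArg toLinearMapRingHom h
  rw [← mul_def d d, ← pow_two, smul_pow, ← pow_mul, comp_smul, toLinearMap_smul, map_smul,
    toLinearMap_comp, toLinearMap_pow, ← Module.End.mul_eq_comp,
    LinearMap.trace_mul_pow_eq_zero_of_anticommute h' (by positivity), smul_zero]

end Exp

theorem LinearMap.trace_prodMap_id_neg_id {R M N : Type*} [CommRing R] [AddCommGroup M]
    [Module R M] [Module.Free R M] [Module.Finite R M] [AddCommGroup N] [Module R N]
    [Module.Free R N] [Module.Finite R N] :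
    trace R (M × N) (prodMap id (-id)) = Module.finrank R M - Module.finrank R N := by
  rw [trace_prodMap', map_neg, trace_id, trace_id, sub_eq_add_neg]

theorem ContinuousLinearMap.finrank_ker_add_finrank_eq_finrank_ker_adjoint_add_finrank
    {𝕜 E F : Type*} [RCLike 𝕜] [NormedAddCommGroup E] [InnerProductSpace 𝕜 E] [CompleteSpace E]
    [FiniteDimensional 𝕜 E] [NormedAddCommGroup F] [InnerProductSpace 𝕜 F] [CompleteSpace F]
    [FiniteDimensional 𝕜 F] (T : E →L[𝕜] F) :
    Module.finrank 𝕜 (LinearMap.ker (T : E →ₗ[𝕜] F)) + Module.finrank 𝕜 F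
      = Module.finrank 𝕜 (LinearMap.ker (adjoint T : F →ₗ[𝕜] E)) + Module.finrank 𝕜 E := by
  have hE := LinearMap.finrank_range_add_finrank_ker (T : E →ₗ[𝕜] F)
  have hF := (LinearMap.range (T : E →ₗ[𝕜] F)).finrank_add_finrank_orthogonal
  rw [orthogonal_range] at hF
  omega

theorem mckean_singer_supertrace_finite_dim_general
    {E F : Type*} [NormedAddCommGroup E] [InnerProductSpace ℂ E] [FiniteDimensional ℂ E]
    [NormedAddCommGroup F] [InnerProductSpace ℂ F] [FiniteDimensional ℂ F]
    (T : E →L[ℂ] F) (D ε : (E × F) →L[ℂ] (E × F))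
    (hD : ∀ (e : E) (f : F), D (e, f) = (ContinuousLinearMap.adjoint T f, T e))
    (hε : ∀ (e : E) (f : F), ε (e, f) = (e, -f))
    (t : ℝ) :
    LinearMap.trace ℂ (E × F)
        ((ε ∘L NormedSpace.exp ((-t) • (D ∘L D))) : (E × F) →L[ℂ] (E × F)).toLinearMap
      = (Module.finrank ℂ (LinearMap.ker (T : E →ₗ[ℂ] F)) : ℂ)
        - (Module.finrank ℂ (LinearMap.ker (ContinuousLinearMap.adjoint T : F →ₗ[ℂ] E)) : ℂ) := by
  have hanti : ε * D = -(D * ε) := ext fun ⟨e, f⟩ ↦ by simp [hD, hε]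
  have hε_prodMap :
      (ε : Module.End ℂ (E × F)) = LinearMap.prodMap LinearMap.id (-LinearMap.id) :=
    LinearMap.ext fun ⟨e, f⟩ ↦ by simp [hε]
  have hindex := congrArg (Nat.cast : ℕ → ℂ)
    T.finrank_ker_add_finrank_eq_finrank_ker_adjoint_add_finrank
  push_cast at hindex
  rw [RCLike.real_smul_eq_coe_smul (K := ℂ) (-t) (D ∘L D),
    trace_comp_exp_smul_sq_of_anticommute hanti, hε_prodMap, LinearMap.trace_prodMap_id_neg_id]
  linear_combination -hindex

/-- Finite-dimensional McKean–Singer supertrace formula: with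
`D(e,f) = (T* f, T e)` odd and grading `ε(e,f) = (e, -f)` on `E ⊕ F`,
one has `Tr_s(exp(-t D²)) = Tr(ε ∘ exp(-t D²)) = dim ker T - dim ker T*`
for every `t > 0`. -/
theorem mckean_singer_supertrace_finite_dim
    {E F : Type*} [NormedAddCommGroup E] [InnerProductSpace ℂ E] [FiniteDimensional ℂ E]
    [NormedAddCommGroup F] [InnerProductSpace ℂ F] [FiniteDimensional ℂ F]
    (T : E →L[ℂ] F) (D ε : (E × F) →L[ℂ] (E × F))
    (hD : ∀ (e : E) (f : F), D (e, f) = (ContinuousLinearMap.adjoint T f, T e))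
    (hε : ∀ (e : E) (f : F), ε (e, f) = (e, -f))
    (t : ℝ) (ht : 0 < t) :
    LinearMap.trace ℂ (E × F)
        ((ε ∘L NormedSpace.exp ((-t) • (D ∘L D))) : (E × F) →L[ℂ] (E × F)).toLinearMap
      = (Module.finrank ℂ (LinearMap.ker (T : E →ₗ[ℂ] F)) : ℂ)
        - (Module.finrank ℂ (LinearMap.ker (ContinuousLinearMap.adjoint T : F →ₗ[ℂ] E)) : ℂ) :=
  mckean_singer_supertrace_finite_dim_general T D ε hD hε t
end
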